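/- For every integer s ≥ 0 and every real x with 0 ≤ x ≤ √((4s+6)(4s+7)), the Taylor polynomial T_{4s+3}(x) = ∑_{i=0}^{2s+1} (−1)^i x^{2i+1}/(2i+1)! satisfies T_{4s+3}(x) ≤ T_{4s+7}(x) ≤ sin x. -/

import Mathlib

/-!
Let `S_n`, `C_n` be the Taylor polynomials of `sin`, `cos` with `n` nonzero terms. Since
`S_n' = C_n`, `C_{n+1}' = -S_n` and all remainders vanish at `0`, integrating over `[0, x]` turns
`(-1)^n (sin - S_n) ≥ 0` into `(-1)^(n+1) (cos - C_{n+1}) ≥ 0`, and that into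
`(-1)^(n+1) (sin - S_{n+1}) ≥ 0`. Starting from `cos ≤ 1`, this gives `S_n ≤ sin` on `[0, ∞)` for
even `n ≥ 2`, in particular `T_{4s+7} = S_{2s+4} ≤ sin`. The two terms by which `T_{4s+7}` exceeds
`T_{4s+3}` are `x^(4s+5)/(4s+5)! - x^(4s+7)/(4s+7)!`, nonnegative as soon as `x² ≤ (4s+6)(4s+7)`.
-/

open Finset Real

noncomputable def sinTaylor (n : ℕ) (x : ℝ) : ℝ :=
  ∑ i ∈ range n, (-1 : ℝ) ^ i * x ^ (2 * i + 1) / (Nat.factorial (2 * i + 1))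

noncomputable def cosTaylor (n : ℕ) (x : ℝ) : ℝ :=
  ∑ i ∈ range n, (-1 : ℝ) ^ i * x ^ (2 * i) / (Nat.factorial (2 * i))

lemma nonneg_of_hasDerivAt_nonneg {f f' : ℝ → ℝ} (hf : ∀ y, HasDerivAt f (f' y) y)
    (hf' : ∀ y, 0 ≤ y → 0 ≤ f' y) (h0 : f 0 = 0) {x : ℝ} (hx : 0 ≤ x) : 0 ≤ f x := by
  have hmono : MonotoneOn f (Set.Ici 0) :=
    monotoneOn_of_hasDerivWithinAt_nonneg (convex_Ici 0)
      (fun y _ ↦ (hf y).continuousAt.continuousWithinAt)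
      (fun y _ ↦ (hf y).hasDerivWithinAt)
      (fun y hy ↦ hf' y (interior_subset hy))
  simpa [h0] using hmono Set.self_mem_Ici hx hx

lemma hasDerivAt_pow_succ_div_factorial (k : ℕ) (x : ℝ) :
    HasDerivAt (fun y : ℝ ↦ y ^ (k + 1) / (k + 1).factorial) (x ^ k / k.factorial) x := by
  refine ((hasDerivAt_pow (k + 1) x).div_const ((k + 1).factorial : ℝ)).congr_deriv ?_
  rw [Nat.factorial_succ, Nat.cast_mul, Nat.add_sub_cancel, mul_div_mul_left _ _ (by positivity)]

lemma hasDerivAt_sinTaylor (n : ℕ) (x : ℝ) : HasDerivAt (sinTaylor n) (cosTaylor n x) x := by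
  unfold sinTaylor cosTaylor
  refine HasDerivAt.fun_sum fun i _ ↦ ?_
  simp only [mul_div_assoc]
  exact (hasDerivAt_pow_succ_div_factorial (2 * i) x).const_mul _

lemma cosTaylor_succ (n : ℕ) (x : ℝ) :
    cosTaylor (n + 1) x =
      1 - ∑ i ∈ range n, (-1 : ℝ) ^ i * (x ^ (2 * i + 2) / (2 * i + 2).factorial) := by
  rw [cosTaylor, sum_range_succ', sub_eq_neg_add, ← sum_neg_distrib]
  simp only [pow_zero, mul_zero, Nat.factorial_zero, Nat.cast_one, div_one, mul_one]
  congr 1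
  refine sum_congr rfl fun i _ ↦ ?_
  rw [show 2 * (i + 1) = 2 * i + 2 by omega]
  ring

lemma hasDerivAt_cosTaylor_succ (n : ℕ) (x : ℝ) :
    HasDerivAt (cosTaylor (n + 1)) (-sinTaylor n x) x := by
  have hsum : HasDerivAt
      (fun y ↦ ∑ i ∈ range n, (-1 : ℝ) ^ i * (y ^ (2 * i + 2) / (2 * i + 2).factorial))
      (sinTaylor n x) x := by
    unfold sinTaylor
    refine HasDerivAt.fun_sum fun i _ ↦ ?_
    rw [mul_div_assoc]
    exact (hasDerivAt_pow_succ_div_factorial (2 * i + 1) x).const_mul _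
  simpa [funext (cosTaylor_succ n)] using hsum.const_sub 1

lemma sinTaylor_zero_right (n : ℕ) : sinTaylor n 0 = 0 := by
  simp [sinTaylor]

lemma cosTaylor_succ_zero_right (n : ℕ) : cosTaylor (n + 1) 0 = 1 := by
  simp [cosTaylor_succ]

lemma cos_sub_cosTaylor_signed_nonneg_of_sin (n : ℕ)
    (h : ∀ y, 0 ≤ y → 0 ≤ (-1 : ℝ) ^ n * (sin y - sinTaylor n y)) {x : ℝ} (hx : 0 ≤ x) :
    0 ≤ (-1 : ℝ) ^ (n + 1) * (cos x - cosTaylor (n + 1) x) := by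
  refine nonneg_of_hasDerivAt_nonneg
    (f := fun y ↦ (-1 : ℝ) ^ (n + 1) * (cos y - cosTaylor (n + 1) y)) (fun y ↦ ?_) h
    (by simp [cosTaylor_succ_zero_right]) hx
  refine (((hasDerivAt_cos y).sub (hasDerivAt_cosTaylor_succ n y)).const_mul _).congr_deriv ?_
  ring

lemma sin_sub_sinTaylor_signed_nonneg_of_cos (n : ℕ)
    (h : ∀ y, 0 ≤ y → 0 ≤ (-1 : ℝ) ^ n * (cos y - cosTaylor n y)) {x : ℝ} (hx : 0 ≤ x) :
    0 ≤ (-1 : ℝ) ^ n * (sin x - sinTaylor n x) :=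
  nonneg_of_hasDerivAt_nonneg
    (fun y ↦ ((hasDerivAt_sin y).sub (hasDerivAt_sinTaylor n y)).const_mul _) h
    (by simp [sinTaylor_zero_right]) hx

lemma cos_sub_cosTaylor_signed_nonneg (n : ℕ) {x : ℝ} (hx : 0 ≤ x) :
    0 ≤ (-1 : ℝ) ^ (n + 1) * (cos x - cosTaylor (n + 1) x) := by
  induction n generalizing x with
  | zero => simpa [cosTaylor] using cos_le_one x
  | succ n ih =>
    exact cos_sub_cosTaylor_signed_nonneg_of_sin (n + 1)
      (fun y hy ↦ sin_sub_sinTaylor_signed_nonneg_of_cos (n + 1) (fun _ ↦ ih) hy) hx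

lemma sinTaylor_le_sin_of_even {n : ℕ} (hn : Even n) (hn0 : n ≠ 0) {x : ℝ} (hx : 0 ≤ x) :
    sinTaylor n x ≤ sin x := by
  obtain ⟨m, rfl⟩ := Nat.exists_eq_succ_of_ne_zero hn0
  have := sin_sub_sinTaylor_signed_nonneg_of_cos (m + 1)
    (fun _ ↦ cos_sub_cosTaylor_signed_nonneg m) hx
  rw [hn.neg_one_pow, one_mul] at this
  linarith

lemma pow_div_factorial_add_two_le {k : ℕ} {x : ℝ} (hx : 0 ≤ x)
    (hxk : x ^ 2 ≤ (k + 1) * (k + 2)) :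
    x ^ (k + 2) / (k + 2).factorial ≤ x ^ k / k.factorial := by
  rw [Nat.factorial_succ, Nat.factorial_succ, pow_add, div_le_div_iff₀ (by positivity)
    (by positivity)]
  push_cast
  have hxk' : 0 ≤ x ^ k * k.factorial := by positivity
  nlinarith [mul_le_mul_of_nonneg_left hxk hxk']

lemma sinTaylor_add_two (n : ℕ) (x : ℝ) :
    sinTaylor (n + 2) x = sinTaylor n x +
      (-1 : ℝ) ^ n * (x ^ (2 * n + 1) / (2 * n + 1).factorial -
        x ^ (2 * n + 3) / (2 * n + 3).factorial) := by
  simp only [sinTaylor, sum_range_succ, show 2 * (n + 1) + 1 = 2 * n + 3 by omega]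
  ring

lemma sinTaylor_le_sinTaylor_add_two {n : ℕ} (hn : Even n) {x : ℝ} (hx : 0 ≤ x)
    (hxn : x ^ 2 ≤ (2 * n + 2) * (2 * n + 3)) :
    sinTaylor n x ≤ sinTaylor (n + 2) x := by
  have := pow_div_factorial_add_two_le (k := 2 * n + 1) hx (by push_cast; linarith)
  rw [sinTaylor_add_two, hn.neg_one_pow, one_mul]
  linarith

theorem sin_taylor_lower (s : ℕ) (x : ℝ) (hx : 0 ≤ x)
    (hx2 : x ≤ Real.sqrt ((4 * s + 6) * (4 * s + 7))) :
    (∑ i ∈ Finset.range (2 * s + 2), (-1 : ℝ) ^ i * x ^ (2 * i + 1) / (Nat.factorial (2 * i + 1))) ≤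
      (∑ i ∈ Finset.range (2 * s + 4), (-1 : ℝ) ^ i * x ^ (2 * i + 1) / (Nat.factorial (2 * i + 1))) ∧
    (∑ i ∈ Finset.range (2 * s + 4), (-1 : ℝ) ^ i * x ^ (2 * i + 1) / (Nat.factorial (2 * i + 1))) ≤
      Real.sin x := by
  have hx_sq : x ^ 2 ≤ (4 * s + 6) * (4 * s + 7) :=
    (sq_le_sq₀ hx (sqrt_nonneg _)).2 hx2 |>.trans_eq (sq_sqrt (by positivity))
  refine ⟨?_, sinTaylor_le_sin_of_even ⟨s + 2, by omega⟩ (by omega) hx⟩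
  exact sinTaylor_le_sinTaylor_add_two (n := 2 * s + 2) ⟨s + 1, by omega⟩ hx
    (by push_cast; linarith)
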